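/- arXiv:1412.1277 — 7 statements merged into one kernel-verified Lean document; each statement's English description precedes it below -/
import Mathlib

section
/- Let N ≥ 1, p > 1, g : ℝ → ℝ be nonnegative, nondecreasing and locally Lipschitz, and let u be a C² radial solution of -Δ_p u = g(u) on the punctured unit ball of ℝᴺ with u_r(r) < 0 for all r ∈ (0,1). Then g(u(r)) ≤ N |u_r(r)|^{p-1} / r for all r ∈ (0,1]. -/
/-!
The flux `F(s) = s^(N-1) |u'(s)|^(p-1)` is nonnegative with `F'(s) = s^(N-1) g(u(s))`.
Since `u` is decreasing and `g` nondecreasing, `g(u(s)) ≥ g(u(r))` for `s ≤ r`, so comparing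
`F` with `s ↦ g(u(r)) s^N / N` on `[ε, r]` and letting `ε → 0⁺` gives
`F(r) ≥ g(u(r)) r^N / N`, which is the claimed bound after dividing by `r^(N-1) / N`.
-/

open Real Set Filter Topology

lemma strictAntiOn_of_hasDerivAt_neg {D : Set ℝ} (hD : Convex ℝ D) {f f' : ℝ → ℝ}
    (hf : ∀ x ∈ D, HasDerivAt f (f' x) x) (hf' : ∀ x ∈ D, f' x < 0) : StrictAntiOn f D :=
  strictAntiOn_of_hasDerivWithinAt_neg hD
    (fun x hx => (hf x hx).continuousAt.continuousWithinAt)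
    (fun x hx => (hf x (interior_subset hx)).hasDerivWithinAt)
    (fun x hx => hf' x (interior_subset hx))

lemma sub_le_sub_of_hasDerivAt_le {f g f' g' : ℝ → ℝ} {a b : ℝ} (hab : a ≤ b)
    (hf : ∀ x ∈ Icc a b, HasDerivAt f (f' x) x) (hg : ∀ x ∈ Icc a b, HasDerivAt g (g' x) x)
    (hle : ∀ x ∈ Ioo a b, g' x ≤ f' x) : g b - g a ≤ f b - f a := by
  have hmono : MonotoneOn (f - g) (Icc a b) :=
    monotoneOn_of_hasDerivWithinAt_nonneg (f' := f' - g') (convex_Icc a b)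
      (fun x hx => ((hf x hx).sub (hg x hx)).continuousAt.continuousWithinAt)
      (fun x hx => by
        rw [interior_Icc] at hx
        exact ((hf x (Ioo_subset_Icc_self hx)).sub (hg x (Ioo_subset_Icc_self hx))).hasDerivWithinAt)
      (fun x hx => by
        rw [interior_Icc] at hx
        exact sub_nonneg.mpr (hle x hx))
  have := hmono (left_mem_Icc.mpr hab) (right_mem_Icc.mpr hab) hab
  simp only [Pi.sub_apply] at this
  linarith

lemma hasDerivAt_const_mul_rpow_div {c N t : ℝ} (hN : N ≠ 0) (ht : 0 < t) :
    HasDerivAt (fun s => c * s ^ N / N) (c * t ^ (N - 1)) t :=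
  (((hasDerivAt_rpow_const (Or.inl ht.ne')).const_mul c).div_const N).congr_deriv
    (by field_simp)

lemma const_mul_rpow_div_le_of_hasDerivAt {F F' : ℝ → ℝ} {c N r : ℝ} (hN : 0 < N) (hr : 0 < r)
    (hF : ∀ s ∈ Ioc 0 r, HasDerivAt F (F' s) s) (hF0 : ∀ s ∈ Ioo 0 r, 0 ≤ F s)
    (hF' : ∀ s ∈ Ioo 0 r, c * s ^ (N - 1) ≤ F' s) : c * r ^ N / N ≤ F r := by
  have hbound : ∀ ε ∈ Ioo 0 r, c * r ^ N / N - c * ε ^ N / N ≤ F r := fun ε hε => by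
    have hsub : Icc ε r ⊆ Ioc 0 r := Icc_subset_Ioc hε.1 le_rfl
    have := sub_le_sub_of_hasDerivAt_le hε.2.le (fun x hx => hF x (hsub hx))
      (fun x hx => hasDerivAt_const_mul_rpow_div hN.ne' (hsub hx).1)
      (fun x hx => hF' x ⟨hε.1.trans hx.1, hx.2⟩)
    linarith [hF0 ε hε]
  have hlim : Tendsto (fun ε : ℝ => c * r ^ N / N - c * ε ^ N / N) (𝓝[>] 0)
      (𝓝 (c * r ^ N / N)) := by
    have hcont : ContinuousAt (fun ε : ℝ => c * r ^ N / N - c * ε ^ N / N) 0 :=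
      (continuousAt_const.sub
        ((continuousAt_const.mul (continuousAt_rpow_const 0 N (Or.inr hN.le))).div_const N))
    simpa [zero_rpow hN.ne'] using hcont.tendsto.mono_left nhdsWithin_le_nhds
  exact le_of_tendsto hlim (mem_of_superset (Ioo_mem_nhdsGT hr) hbound)

theorem g_pointwise_bound_general
    (N p : ℝ) (hN : 1 ≤ N)
    (g : ℝ → ℝ) (hgmono : Monotone g)
    (u u' : ℝ → ℝ)
    (hu : ∀ r ∈ Ioc (0:ℝ) 1, HasDerivAt u (u' r) r)
    (hu'neg : ∀ r ∈ Ioc (0:ℝ) 1, u' r < 0)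
    (heq : ∀ r ∈ Ioc (0:ℝ) 1,
      HasDerivAt (fun s => s ^ (N - 1) * |u' s| ^ (p - 1))
        (r ^ (N - 1) * g (u r)) r) :
    ∀ r ∈ Ioc (0:ℝ) 1, g (u r) ≤ N * |u' r| ^ (p - 1) / r := by
  rintro r ⟨hr0, hr1⟩
  have hsub : Ioc 0 r ⊆ Ioc (0:ℝ) 1 := Ioc_subset_Ioc_right hr1
  have hanti := strictAntiOn_of_hasDerivAt_neg (convex_Ioc 0 1) hu hu'neg
  have hderiv_ge : ∀ s ∈ Ioo 0 r, g (u r) * s ^ (N - 1) ≤ s ^ (N - 1) * g (u s) := fun s hs => by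
    rw [mul_comm]
    exact mul_le_mul_of_nonneg_left
      (hgmono (hanti.antitoneOn (hsub (Ioo_subset_Ioc_self hs)) ⟨hr0, hr1⟩ hs.2.le))
      (rpow_nonneg hs.1.le _)
  have hflux := const_mul_rpow_div_le_of_hasDerivAt (by linarith) hr0
    (fun s hs => heq s (hsub hs)) (fun s hs => by have := hs.1; positivity) hderiv_ge
  rw [rpow_sub_one hr0.ne'] at hflux
  rw [le_div_iff₀ hr0]
  field_simp at hflux
  nlinarith [rpow_pos_of_pos hr0 N]

/-- For a radial solution of `-Δ_p u = g(u)` on the punctured unit ball with `u_r < 0`,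
where `g ≥ 0` is nondecreasing and locally Lipschitz, one has
`g(u(r)) ≤ N |u_r(r)|^{p-1} / r` for all `r ∈ (0,1]`.
The equation in radial coordinates reads
`∂_r ( r^{N-1} |u_r|^{p-1} ) = r^{N-1} g(u)` (using `u_r < 0`). -/
theorem g_pointwise_bound
    (N p : ℝ) (hN : 1 ≤ N) (hp : 1 < p)
    (g : ℝ → ℝ) (hg0 : ∀ x, 0 ≤ g x) (hgmono : Monotone g)
    (hglip : LocallyLipschitz g)
    (u u' : ℝ → ℝ)
    (hu : ∀ r ∈ Ioc (0:ℝ) 1, HasDerivAt u (u' r) r)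
    (hu'neg : ∀ r ∈ Ioc (0:ℝ) 1, u' r < 0)
    (heq : ∀ r ∈ Ioc (0:ℝ) 1,
      HasDerivAt (fun s => s ^ (N - 1) * |u' s| ^ (p - 1))
        (r ^ (N - 1) * g (u r)) r) :
    ∀ r ∈ Ioc (0:ℝ) 1, g (u r) ≤ N * |u' r| ^ (p - 1) / r :=
  g_pointwise_bound_general N p hN g hgmono u u' hu hu'neg heq
end

section
/- Let N ≥ 1, p > 1, g : ℝ → ℝ be nonnegative, nondecreasing and locally Lipschitz, and let u be a C² radial solution of -Δ_p u = g(u) on the punctured unit ball with u_r < 0 on (0,1). Then for all r ∈ (0,1], |u_rr(r)| ≤ ((2N-1)/(p-1)) |u_r(r)| / r. -/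
open Real Set Filter Topology

/-! The flux `φ(s) = s^(N-1) |u'(s)|^(p-1)` satisfies `φ' = s^(N-1) g(u)`. As `u` decreases,
`g(u(s)) ≥ g(u(r))` for `s ≤ r`; since `φ ≥ 0`, integrating from `0` to `r` gives
`φ(r) ≥ g(u(r)) r^N / N`, i.e. `g(u(r)) ≤ N |u'(r)|^(p-1) / r`. Expanding `φ'` gives
`u'' = -(g(u)/|u'|^(p-2) + (N-1) u'/r)/(p-1)`, and by the triangle inequality the bracket is at
most `(N + (N-1)) |u'| / r`. -/

theorem HasDerivAt.rpow_mul_abs_rpow_of_neg {v : ℝ → ℝ} {a b d r : ℝ} (hr : 0 < r)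
    (hv : HasDerivAt v d r) (hneg : v r < 0) :
    HasDerivAt (fun s => s ^ a * |v s| ^ b)
      (a * r ^ (a - 1) * |v r| ^ b - r ^ a * (b * |v r| ^ (b - 1) * d)) r := by
  have habs : HasDerivAt (fun s => |v s|) (-d) r :=
    ((hasDerivAt_abs_neg hneg).comp r hv).congr_deriv (by ring)
  have hpow := habs.rpow_const (p := b) (Or.inl (abs_pos.2 hneg.ne).ne')
  exact ((hasDerivAt_rpow_const (p := a) (Or.inl hr.ne')).mul hpow).congr_deriv (by ring)

theorem radial_second_deriv_eq {u' : ℝ → ℝ} {N p r d f : ℝ} (hp : 1 < p) (hr : 0 < r)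
    (hu' : HasDerivAt u' d r) (hneg : u' r < 0)
    (heq : HasDerivAt (fun s => s ^ (N - 1) * |u' s| ^ (p - 1)) (r ^ (N - 1) * f) r) :
    d = -(1 / (p - 1)) * (f / |u' r| ^ (p - 2) + (N - 1) / r * u' r) := by
  have hW : 0 < |u' r| := abs_pos.2 hneg.ne
  have hflux := heq.unique (hu'.rpow_mul_abs_rpow_of_neg hr hneg)
  have hr' : r ^ (N - 1 - 1) = r ^ (N - 1) / r := by rw [rpow_sub hr, rpow_one]
  have hW' : |u' r| ^ (p - 1) = |u' r| ^ (p - 2) * -u' r := by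
    rw [show p - 1 = p - 2 + 1 by ring, rpow_add_one hW.ne', abs_of_neg hneg]
  rw [hr', hW', show p - 1 - 1 = p - 2 by ring] at hflux
  have hrN : 0 < r ^ (N - 1) := rpow_pos_of_pos hr _
  have hWp : 0 < |u' r| ^ (p - 2) := rpow_pos_of_pos hW _
  have hp1 : p - 1 ≠ 0 := (sub_pos.2 hp).ne'
  field_simp at hflux ⊢
  linear_combination hflux

theorem mul_rpow_div_le_of_hasDerivAt {φ φ' : ℝ → ℝ} {c N r : ℝ} (hN : 0 < N) (hr : 0 < r)
    (hφ0 : ∀ s ∈ Ioc 0 r, 0 ≤ φ s) (hφ : ∀ s ∈ Ioc 0 r, HasDerivAt φ (φ' s) s)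
    (hφ' : ∀ s ∈ Ioc 0 r, c * s ^ (N - 1) ≤ φ' s) :
    c * r ^ N / N ≤ φ r := by
  set ψ : ℝ → ℝ := fun s => φ s - c * s ^ N / N
  have hψ : ∀ s ∈ Ioc 0 r, HasDerivAt ψ (φ' s - c * s ^ (N - 1)) s := fun s hs =>
    ((hφ s hs).sub (((hasDerivAt_rpow_const (Or.inl hs.1.ne')).const_mul c).div_const N))
      |>.congr_deriv (by field_simp)
  have hmono : MonotoneOn ψ (Ioc 0 r) := by
    refine monotoneOn_of_hasDerivWithinAt_nonneg (f' := fun s => φ' s - c * s ^ (N - 1))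
      (convex_Ioc 0 r)
      (fun s hs => (hψ s hs).continuousAt.continuousWithinAt) (fun s hs => ?_) (fun s hs => ?_)
    all_goals rw [interior_Ioc] at hs
    · exact (hψ s (Ioo_subset_Ioc_self hs)).hasDerivWithinAt
    · exact sub_nonneg.2 (hφ' s (Ioo_subset_Ioc_self hs))
  have hlim : Tendsto (fun s : ℝ => -(c * s ^ N / N)) (𝓝[>] 0) (𝓝 0) := by
    have h0 := (continuousAt_rpow_const 0 N (Or.inr hN.le)).tendsto
    rw [zero_rpow hN.ne'] at h0
    simpa using ((h0.const_mul c).div_const N).neg.mono_left nhdsWithin_le_nhds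
  have hψr : 0 ≤ ψ r := by
    refine le_of_tendsto hlim ?_
    filter_upwards [Ioo_mem_nhdsGT hr] with s hs
    have hs' : s ∈ Ioc 0 r := Ioo_subset_Ioc_self hs
    calc -(c * s ^ N / N) ≤ ψ s := by simp only [ψ]; linarith [hφ0 s hs']
      _ ≤ ψ r := hmono hs' ⟨hr, le_rfl⟩ hs.2.le
  simp only [ψ] at hψr
  linarith

theorem radial_source_le {N p r : ℝ} {g u u' : ℝ → ℝ} (hN : 0 < N) (hr : 0 < r)
    (hgmono : Monotone g) (hu : ∀ s ∈ Ioc 0 r, HasDerivAt u (u' s) s)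
    (hu'neg : ∀ s ∈ Ioc 0 r, u' s < 0)
    (heq : ∀ s ∈ Ioc 0 r,
      HasDerivAt (fun s => s ^ (N - 1) * |u' s| ^ (p - 1)) (s ^ (N - 1) * g (u s)) s) :
    g (u r) ≤ N * |u' r| ^ (p - 1) / r := by
  have hanti : AntitoneOn u (Ioc 0 r) := by
    refine antitoneOn_of_hasDerivWithinAt_nonpos (f' := u') (convex_Ioc 0 r)
      (fun s hs => (hu s hs).continuousAt.continuousWithinAt) (fun s hs => ?_) (fun s hs => ?_)
    all_goals rw [interior_Ioc] at hs
    · exact (hu s (Ioo_subset_Ioc_self hs)).hasDerivWithinAt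
    · exact (hu'neg s (Ioo_subset_Ioc_self hs)).le
  have hflux := mul_rpow_div_le_of_hasDerivAt hN hr
    (fun s hs => mul_nonneg (rpow_nonneg hs.1.le _) (rpow_nonneg (abs_nonneg _) _)) heq
    fun s hs => by
      rw [mul_comm]
      exact mul_le_mul_of_nonneg_left (hgmono (hanti hs ⟨hr, le_rfl⟩ hs.2))
        (rpow_nonneg hs.1.le _)
  rw [show r ^ N = r ^ (N - 1) * r by rw [← rpow_add_one hr.ne']; ring_nf,
    div_le_iff₀ hN] at hflux
  rw [le_div_iff₀ hr]
  nlinarith [rpow_pos_of_pos hr (N - 1)]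

theorem second_deriv_bound_general
    (N p : ℝ) (hN : 1 ≤ N) (hp : 1 < p)
    (g : ℝ → ℝ) (hg0 : ∀ x, 0 ≤ g x) (hgmono : Monotone g)
    (u u' u'' : ℝ → ℝ)
    (hu : ∀ r ∈ Ioc (0:ℝ) 1, HasDerivAt u (u' r) r)
    (hu' : ∀ r ∈ Ioc (0:ℝ) 1, HasDerivAt u' (u'' r) r)
    (hu'neg : ∀ r ∈ Ioc (0:ℝ) 1, u' r < 0)
    (heq : ∀ r ∈ Ioc (0:ℝ) 1,
      HasDerivAt (fun s => s ^ (N - 1) * |u' s| ^ (p - 1))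
        (r ^ (N - 1) * g (u r)) r) :
    ∀ r ∈ Ioc (0:ℝ) 1, |u'' r| ≤ ((2 * N - 1) / (p - 1)) * |u' r| / r := by
  intro r hr
  have hsub : Ioc 0 r ⊆ Ioc (0:ℝ) 1 := Ioc_subset_Ioc_right hr.2
  have hW : 0 < |u' r| := abs_pos.2 (hu'neg r hr).ne
  have hbound := radial_source_le (by linarith) hr.1 hgmono (fun s hs => hu s (hsub hs))
    (fun s hs => hu'neg s (hsub hs)) (fun s hs => heq s (hsub hs))
  rw [radial_second_deriv_eq hp hr.1 (hu' r hr) (hu'neg r hr) (heq r hr), abs_mul, abs_neg,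
    abs_of_pos (one_div_pos.2 (sub_pos.2 hp))]
  set q := g (u r) / |u' r| ^ (p - 2)
  have hq0 : 0 ≤ q := div_nonneg (hg0 _) (rpow_nonneg hW.le _)
  have hq : q ≤ N * |u' r| / r := by
    rw [div_le_iff₀ (rpow_pos_of_pos hW _)]
    rw [show p - 1 = p - 2 + 1 by ring, rpow_add_one hW.ne'] at hbound
    linarith [show N * (|u' r| ^ (p - 2) * |u' r|) / r = N * |u' r| / r * |u' r| ^ (p - 2) by ring]
  have hlin : |(N - 1) / r * u' r| = (N - 1) / r * |u' r| := by
    rw [abs_mul, abs_of_nonneg (div_nonneg (by linarith) hr.1.le)]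
  calc 1 / (p - 1) * |q + (N - 1) / r * u' r|
      ≤ 1 / (p - 1) * (N * |u' r| / r + (N - 1) / r * |u' r|) := by
        gcongr
        exact (abs_add_le _ _).trans (by rw [abs_of_nonneg hq0, hlin]; gcongr)
    _ = (2 * N - 1) / (p - 1) * |u' r| / r := by ring

/-- For a `C²` radial solution of `-Δ_p u = g(u)` on the punctured unit ball with
`u_r < 0`, where `g ≥ 0` is nondecreasing and locally Lipschitz, one has
`|u_rr(r)| ≤ ((2N-1)/(p-1)) |u_r(r)| / r` for all `r ∈ (0,1]`. -/
theorem second_deriv_bound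
    (N p : ℝ) (hN : 1 ≤ N) (hp : 1 < p)
    (g : ℝ → ℝ) (hg0 : ∀ x, 0 ≤ g x) (hgmono : Monotone g)
    (hglip : LocallyLipschitz g)
    (u u' u'' : ℝ → ℝ)
    (hu : ∀ r ∈ Ioc (0:ℝ) 1, HasDerivAt u (u' r) r)
    (hu' : ∀ r ∈ Ioc (0:ℝ) 1, HasDerivAt u' (u'' r) r)
    (hu'neg : ∀ r ∈ Ioc (0:ℝ) 1, u' r < 0)
    (heq : ∀ r ∈ Ioc (0:ℝ) 1,
      HasDerivAt (fun s => s ^ (N - 1) * |u' s| ^ (p - 1))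
        (r ^ (N - 1) * g (u r)) r) :
    ∀ r ∈ Ioc (0:ℝ) 1, |u'' r| ≤ ((2 * N - 1) / (p - 1)) * |u' r| / r :=
  second_deriv_bound_general N p hN hp g hg0 hgmono u u' u'' hu hu' hu'neg heq
end

section
/- Let N ≥ 1, p > 1, g : ℝ → ℝ nonnegative, nondecreasing and locally Lipschitz, and u a radial solution of -Δ_p u = g(u) on the punctured unit ball with u_r(r) < 0 for all r ∈ (0,1). Then the function r ↦ |u_r(r)|^{p-1} / r is nonincreasing on (0,1]. -/
open Real Set Filter Topology

/-!
Write `F r = r ^ (N - 1) * |u' r| ^ (p - 1)`, so that `F' r = r ^ (N - 1) * g (u r)` and the claim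
is that `F r / r ^ N` is nonincreasing. Since `u` decreases, `h = g ∘ u` is nonincreasing. Fix
`a < b` and `c = h a`. On `(0, a]` we have `h ≥ c`, so `F - (c / N) r ^ N` increases there, and
`F ≥ 0` gives `F a ≥ (c / N) a ^ N`. On `[a, b]` we have `h ≤ c`, so
`F b ≤ F a + (c / N) (b ^ N - a ^ N) ≤ F a + (F a / a ^ N) (b ^ N - a ^ N) = (F a / a ^ N) b ^ N`.
-/

section RpowComparison

variable {N c : ℝ} {F h : ℝ → ℝ} {D : Set ℝ}

lemma hasDerivAt_sub_div_mul_rpow (hN : N ≠ 0) {r : ℝ} (hr : 0 < r)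
    (hF : HasDerivAt F (r ^ (N - 1) * h r) r) (c : ℝ) :
    HasDerivAt (fun s => F s - c / N * s ^ N) (r ^ (N - 1) * (h r - c)) r := by
  have hpow := (hasDerivAt_rpow_const (p := N) (Or.inl hr.ne')).const_mul (c / N)
  refine (hF.sub hpow).congr_deriv ?_
  field_simp

lemma monotoneOn_sub_div_mul_rpow (hN : N ≠ 0) (hD : Convex ℝ D) (hDpos : D ⊆ Ioi 0)
    (hF : ∀ r ∈ D, HasDerivAt F (r ^ (N - 1) * h r) r) (hc : ∀ r ∈ interior D, c ≤ h r) :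
    MonotoneOn (fun s => F s - c / N * s ^ N) D := by
  have hderiv r (hr : r ∈ D) := hasDerivAt_sub_div_mul_rpow hN (hDpos hr) (hF r hr) c
  refine monotoneOn_of_hasDerivWithinAt_nonneg hD
    (fun r hr => (hderiv r hr).continuousAt.continuousWithinAt)
    (fun r hr => (hderiv r (interior_subset hr)).hasDerivWithinAt) fun r hr => ?_
  have hr0 : 0 < r := hDpos (interior_subset hr)
  exact mul_nonneg (rpow_nonneg hr0.le _) (sub_nonneg.2 (hc r hr))

lemma antitoneOn_sub_div_mul_rpow (hN : N ≠ 0) (hD : Convex ℝ D) (hDpos : D ⊆ Ioi 0)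
    (hF : ∀ r ∈ D, HasDerivAt F (r ^ (N - 1) * h r) r) (hc : ∀ r ∈ interior D, h r ≤ c) :
    AntitoneOn (fun s => F s - c / N * s ^ N) D := by
  have hderiv r (hr : r ∈ D) := hasDerivAt_sub_div_mul_rpow hN (hDpos hr) (hF r hr) c
  refine antitoneOn_of_hasDerivWithinAt_nonpos hD
    (fun r hr => (hderiv r hr).continuousAt.continuousWithinAt)
    (fun r hr => (hderiv r (interior_subset hr)).hasDerivWithinAt) fun r hr => ?_
  have hr0 : 0 < r := hDpos (interior_subset hr)
  exact mul_nonpos_of_nonneg_of_nonpos (rpow_nonneg hr0.le _) (sub_nonpos.2 (hc r hr))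

lemma div_mul_rpow_le_of_hasDerivAt_of_nonneg (hN : 0 < N) {a : ℝ} (ha : 0 < a)
    (hF : ∀ r ∈ Ioc 0 a, HasDerivAt F (r ^ (N - 1) * h r) r)
    (hF0 : ∀ r ∈ Ioc 0 a, 0 ≤ F r) (hc : ∀ r ∈ Ioo 0 a, c ≤ h r) :
    c / N * a ^ N ≤ F a := by
  have hmono : MonotoneOn (fun s => F s - c / N * s ^ N) (Ioc 0 a) :=
    monotoneOn_sub_div_mul_rpow hN.ne' (convex_Ioc 0 a) Ioc_subset_Ioi_self hF
      (by rwa [interior_Ioc])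
  have hbound : ∀ ε ∈ Ioc 0 a, c / N * a ^ N - c / N * ε ^ N ≤ F a := fun ε hε => by
    have := hmono hε (right_mem_Ioc.2 ha) hε.2
    linarith [hF0 ε hε]
  have hlim : Tendsto (fun ε : ℝ => c / N * a ^ N - c / N * ε ^ N) (𝓝[>] 0)
      (𝓝 (c / N * a ^ N)) := by
    have hpow : Tendsto (fun ε : ℝ => ε ^ N) (𝓝[>] 0) (𝓝 0) := by
      simpa [zero_rpow hN.ne'] using
        (continuousAt_rpow_const 0 N (Or.inr hN.le)).tendsto.mono_left nhdsWithin_le_nhds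
    simpa using tendsto_const_nhds.sub (hpow.const_mul (c / N))
  exact le_of_tendsto hlim (eventually_of_mem (Ioc_mem_nhdsGT ha) hbound)

theorem antitoneOn_div_rpow_of_hasDerivAt (hN : 0 < N) {b : ℝ}
    (hF : ∀ r ∈ Ioc 0 b, HasDerivAt F (r ^ (N - 1) * h r) r)
    (hh : AntitoneOn h (Ioc 0 b)) (hF0 : ∀ r ∈ Ioc 0 b, 0 ≤ F r) :
    AntitoneOn (fun r => F r / r ^ N) (Ioc 0 b) := by
  intro a ha x hx hax
  have hIoc : Ioc 0 a ⊆ Ioc 0 b := Ioc_subset_Ioc_right ha.2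
  have hIcc : Icc a x ⊆ Ioc 0 b := fun r hr => ⟨ha.1.trans_le hr.1, hr.2.trans hx.2⟩
  have haN : 0 < a ^ N := rpow_pos_of_pos ha.1 N
  have hlow : h a / N * a ^ N ≤ F a :=
    div_mul_rpow_le_of_hasDerivAt_of_nonneg hN ha.1 (fun r hr => hF r (hIoc hr))
      (fun r hr => hF0 r (hIoc hr))
      fun r hr => hh (hIoc (Ioo_subset_Ioc_self hr)) ha hr.2.le
  have hslope : h a / N ≤ F a / a ^ N := (le_div_iff₀ haN).2 hlow
  have hstep : F x - h a / N * x ^ N ≤ F a - h a / N * a ^ N :=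
    antitoneOn_sub_div_mul_rpow hN.ne' (convex_Icc a x) (fun r hr => (hIcc hr).1)
      (fun r hr => hF r (hIcc hr))
      (fun r hr => hh ha (hIcc (interior_subset hr)) (interior_subset hr).1)
      (left_mem_Icc.2 hax) (right_mem_Icc.2 hax) hax
  have hpow : a ^ N ≤ x ^ N := rpow_le_rpow ha.1.le hax hN.le
  rw [div_le_iff₀ (rpow_pos_of_pos hx.1 N)]
  calc F x ≤ F a + h a / N * (x ^ N - a ^ N) := by linarith
    _ ≤ F a + F a / a ^ N * (x ^ N - a ^ N) := by gcongr
    _ = F a / a ^ N * x ^ N := by field_simp; ring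

end RpowComparison

theorem flux_div_antitone_general
    (N p : ℝ) (hN : 1 ≤ N)
    (g : ℝ → ℝ) (hgmono : Monotone g)
    (u u' : ℝ → ℝ)
    (hu : ∀ r ∈ Ioc (0:ℝ) 1, HasDerivAt u (u' r) r)
    (hu'neg : ∀ r ∈ Ioc (0:ℝ) 1, u' r < 0)
    (heq : ∀ r ∈ Ioc (0:ℝ) 1,
      HasDerivAt (fun s => s ^ (N - 1) * |u' s| ^ (p - 1))
        (r ^ (N - 1) * g (u r)) r) :
    AntitoneOn (fun r => |u' r| ^ (p - 1) / r) (Ioc (0:ℝ) 1) := by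
  have hu_anti : AntitoneOn u (Ioc 0 1) :=
    antitoneOn_of_hasDerivWithinAt_nonpos (convex_Ioc 0 1)
      (fun r hr => (hu r hr).continuousAt.continuousWithinAt)
      (fun r hr => (hu r (interior_subset hr)).hasDerivWithinAt)
      fun r hr => (hu'neg r (interior_subset hr)).le
  have hflux := antitoneOn_div_rpow_of_hasDerivAt (by linarith) heq
    (hgmono.comp_antitoneOn hu_anti)
    fun r hr => mul_nonneg (rpow_nonneg hr.1.le _) (rpow_nonneg (abs_nonneg _) _)
  refine hflux.congr fun r hr => ?_
  have hrN : r ^ N ≠ 0 := (rpow_pos_of_pos hr.1 N).ne'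
  simp only [rpow_sub_one hr.1.ne']
  field_simp

/-- For a radial solution of `-Δ_p u = g(u)` on the punctured unit ball with `u_r < 0`,
where `g ≥ 0` is nondecreasing and locally Lipschitz, the function
`r ↦ |u_r(r)|^{p-1} / r` is nonincreasing on `(0,1]`. -/
theorem flux_div_antitone
    (N p : ℝ) (hN : 1 ≤ N) (hp : 1 < p)
    (g : ℝ → ℝ) (hg0 : ∀ x, 0 ≤ g x) (hgmono : Monotone g)
    (hglip : LocallyLipschitz g)
    (u u' : ℝ → ℝ)
    (hu : ∀ r ∈ Ioc (0:ℝ) 1, HasDerivAt u (u' r) r)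
    (hu'neg : ∀ r ∈ Ioc (0:ℝ) 1, u' r < 0)
    (heq : ∀ r ∈ Ioc (0:ℝ) 1,
      HasDerivAt (fun s => s ^ (N - 1) * |u' s| ^ (p - 1))
        (r ^ (N - 1) * g (u r)) r) :
    AntitoneOn (fun r => |u' r| ^ (p - 1) / r) (Ioc (0:ℝ) 1) :=
  flux_div_antitone_general N p hN g hgmono u u' hu hu'neg heq
end

section
/- Let p > 1, N > p + 4p/(p-1), set α = (1/p)(N - 2√((N-1)/(p-1)) - p - 2) > 0, m = ((p-1)N - 2√((p-1)(N-1)) - p + 2)/(N - 2√((N-1)/(p-1)) - p - 2), and λ* = (p/(m-(p-1)))^{p-1} (N - mp/(m-(p-1))). Then u(r) = r^{-α} - 1 solves the radial p-Laplace equation -(r^{N-1}|u_r|^{p-2}u_r)' = r^{N-1} λ* (1+u(r))^m for r ∈ (0,1), with u(1) = 0. -/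
open Real Set

/-!
Away from `r = 0` the flux `r^(N-1) (α r^(-α-1))^(p-1)` is the single power
`α^(p-1) r^(N-1-(α+1)(p-1))`, whose derivative is again a power of `r`. It matches
`λ r^(N-1) (r^(-α))^m` exactly when the exponents agree, i.e. `α m = (p-1) α + p`, and the
constants then force `λ = α^(p-1) (N - α m)`. The choice of `α` and `m` in terms of `√((N-1)/(p-1))`
is made so that this exponent relation holds, and `N > p + 4p/(p-1)` makes `α` positive.
-/

lemma Real.sqrt_mul_eq_mul_sqrt_div {c : ℝ} (hc : 0 ≤ c) (x : ℝ) :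
    √(c * x) = c * √(x / c) := by
  rcases hc.eq_or_lt with rfl | hc
  · simp
  rw [← Real.sqrt_sq hc.le, ← Real.sqrt_mul (sq_nonneg c), Real.sqrt_sq hc.le]
  congr 1
  field_simp

lemma extremal_denominator_pos {p N : ℝ} (hp : 1 < p) (hN : N > p + 4 * p / (p - 1)) :
    0 < N - 2 * √((N - 1) / (p - 1)) - p - 2 := by
  have hp1 : 0 < p - 1 := by linarith
  have hNp : 4 * p < (N - p) * (p - 1) := by
    rwa [gt_iff_lt, ← lt_sub_iff_add_lt', div_lt_iff₀ hp1] at hN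
  have ht : 0 < N - p - 2 := by nlinarith
  have hsqrt : √((N - 1) / (p - 1)) < (N - p - 2) / 2 := by
    rw [Real.sqrt_lt' (by positivity), div_lt_iff₀ hp1]
    nlinarith
  linarith

lemma extremal_exponent_relation {p N a m : ℝ} (hp : 1 < p)
    (hD : N - 2 * √((N - 1) / (p - 1)) - p - 2 ≠ 0)
    (ha : a = (1 / p) * (N - 2 * √((N - 1) / (p - 1)) - p - 2))
    (hm : m = ((p - 1) * N - 2 * √((p - 1) * (N - 1)) - p + 2) /
      (N - 2 * √((N - 1) / (p - 1)) - p - 2)) :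
    a * m = (p - 1) * a + p := by
  have hp0 : p ≠ 0 := by positivity
  rw [hm, ha, Real.sqrt_mul_eq_mul_sqrt_div (by linarith : (0:ℝ) ≤ p - 1)]
  field_simp
  ring

lemma div_sub_eq_of_mul_eq {p a m : ℝ} (hp : p ≠ 0) (ha : a ≠ 0)
    (ham : a * m = (p - 1) * a + p) : p / (m - (p - 1)) = a := by
  have hm : m - (p - 1) = p / a := by
    rw [eq_div_iff ha]
    linarith
  rw [hm, div_div_cancel₀ hp]

lemma flux_eq_rpow {N p a s : ℝ} (ha : 0 ≤ a) (hs : 0 < s) :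
    s ^ (N - 1) * (a * s ^ (-a - 1)) ^ (p - 1) = a ^ (p - 1) * s ^ (N - 1 - (a + 1) * (p - 1)) := by
  rw [Real.mul_rpow ha (Real.rpow_nonneg hs.le _), ← Real.rpow_mul hs.le,
    sub_eq_add_neg (N - 1), Real.rpow_add hs]
  ring_nf

lemma hasDerivAt_flux_of_exponent_relation {N p a m r : ℝ} (ha : 0 ≤ a)
    (ham : a * m = (p - 1) * a + p) (hr : 0 < r) :
    HasDerivAt (fun s : ℝ => s ^ (N - 1) * (a * s ^ (-a - 1)) ^ (p - 1))
      (r ^ (N - 1) * (a ^ (p - 1) * (N - a * m)) * (r ^ (-a)) ^ m) r := by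
  set c := N - 1 - (a + 1) * (p - 1)
  have hflux : (fun s : ℝ => a ^ (p - 1) * s ^ c)
      =ᶠ[nhds r] fun s : ℝ => s ^ (N - 1) * (a * s ^ (-a - 1)) ^ (p - 1) := by
    filter_upwards [eventually_gt_nhds hr] with s hs
    exact (flux_eq_rpow ha hs).symm
  have hc : c = N - a * m := by simp only [c]; linarith
  have hpow : r ^ (N - 1) * (r ^ (-a)) ^ m = r ^ (c - 1) := by
    rw [← Real.rpow_mul hr.le, ← Real.rpow_add hr, hc]
    ring_nf
  refine (((Real.hasDerivAt_rpow_const (Or.inl hr.ne')).const_mul _).congr_of_eventuallyEq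
    hflux.symm).congr_deriv ?_
  rw [mul_comm (r ^ (N - 1)), mul_assoc, hpow, ← hc]
  ring

/-- For `N > p + 4p/(p-1)`, with `α = (1/p)(N - 2√((N-1)/(p-1)) - p - 2)`,
`m = ((p-1)N - 2√((p-1)(N-1)) - p + 2)/(N - 2√((N-1)/(p-1)) - p - 2)` and
`λ* = (p/(m-(p-1)))^{p-1}(N - mp/(m-(p-1)))`, the function `u(r) = r^{-α} - 1`
solves `-(r^{N-1}|u_r|^{p-2}u_r)' = r^{N-1} λ* (1+u)^m` on `(0,1)` with `u(1) = 0`.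
Here `u_r(r) = -α r^{-α-1}`, so `-(r^{N-1}|u_r|^{p-2}u_r) = r^{N-1}(α r^{-α-1})^{p-1}`. -/
theorem power_extremal_solution
    (p N a m lam : ℝ) (hp : 1 < p) (hN : N > p + 4 * p / (p - 1))
    (ha : a = (1 / p) * (N - 2 * Real.sqrt ((N - 1) / (p - 1)) - p - 2))
    (hm : m = ((p - 1) * N - 2 * Real.sqrt ((p - 1) * (N - 1)) - p + 2) /
      (N - 2 * Real.sqrt ((N - 1) / (p - 1)) - p - 2))
    (hlam : lam = (p / (m - (p - 1))) ^ (p - 1) * (N - m * p / (m - (p - 1)))) :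
    (∀ r ∈ Ioo (0:ℝ) 1,
      (HasDerivAt (fun s : ℝ => s ^ (-a) - 1) (-a * r ^ (-a - 1)) r ∧
       HasDerivAt (fun s : ℝ => s ^ (N - 1) * (a * s ^ (-a - 1)) ^ (p - 1))
         (r ^ (N - 1) * lam * (1 + (r ^ (-a) - 1)) ^ m) r)) ∧
    (1 : ℝ) ^ (-a) - 1 = 0 := by
  have hD := extremal_denominator_pos hp hN
  have hp0 : 0 < p := by linarith
  have ha_pos : 0 < a := by rw [ha]; positivity
  have ham := extremal_exponent_relation hp hD.ne' ha hm
  rw [mul_div_assoc, div_sub_eq_of_mul_eq hp0.ne' ha_pos.ne' ham, mul_comm m] at hlam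
  refine ⟨fun r ⟨hr, _⟩ => ⟨?_, ?_⟩, by simp⟩
  · simpa using (Real.hasDerivAt_rpow_const (p := -a) (Or.inl hr.ne')).sub_const 1
  · rw [hlam, add_sub_cancel]
    exact hasDerivAt_flux_of_exponent_relation ha_pos.le ham hr
end

section
/- Let N ≥ p + 4p/(p-1) with p > 1, let h ∈ C²(0,1] ∩ L¹(0,1] be nonnegative, Φ(r) = r^{2√((N-1)/(p-1))}(1 + ∫₀ʳ h), and u_r < 0 defined by Φ'(r) = (N-1) r^{N-3}|u_r(r)|^p. Then |u_r(r)| ≥ c_{N,p} r^{-(1/p)(N - 2√((N-1)/(p-1)) - 2)} for all r ∈ (0,1], where c_{N,p} = ( (2/(N-1))√((N-1)/(p-1)) )^{1/p}; consequently u_r ∉ L¹(0,1) and any primitive u with this radial derivative satisfies u(r) → +∞ as r → 0⁺. -/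
open Real MeasureTheory Set Filter Topology

/-! With `α = 2√((N-1)/(p-1))`, nonnegativity of `h` makes `Φ(r) - r^α = r^α ∫₀ʳ h`
monotone, so `Φ' ≥ α r^(α-1)`, and solving the defining relation for `w` gives the lower
bound. The hypothesis on `N` amounts to `α ≤ N - 2 - p`, which makes the exponent of that
bound at most `-1`. Hence `w ≥ C/r`, which is not integrable at `0`, and a primitive of `-w`
dominates `-C log r`. -/

lemma accPt_Ioc_of_mem {a b r : ℝ} (hr : r ∈ Ioc a b) : AccPt r (𝓟 (Ioc a b)) := by
  rw [accPt_principal_iff_nhdsWithin]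
  refine (nhdsLT_neBot r).mono ?_
  calc 𝓝[<] r = 𝓝[Ioo a r] r := (nhdsWithin_Ioo_eq_nhdsLT hr.1).symm
    _ ≤ 𝓝[Ioc a b \ {r}] r :=
      nhdsWithin_mono r fun x hx => ⟨⟨hx.1, hx.2.le.trans hr.2⟩, hx.2.ne⟩

lemma HasDerivAt.le_of_monotoneOn_sub {f g : ℝ → ℝ} {s : Set ℝ} {x f' g' : ℝ}
    (hf : HasDerivAt f f' x) (hg : HasDerivAt g g' x) (hx : AccPt x (𝓟 s))
    (hmono : MonotoneOn (fun y => f y - g y) s) : g' ≤ f' :=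
  sub_nonneg.1 ((hf.sub hg).hasDerivWithinAt.nonneg_of_monotoneOn hx hmono)

lemma monotoneOn_setIntegral_Ioo {h : ℝ → ℝ} {a b : ℝ} (hh0 : ∀ x ∈ Ioc a b, 0 ≤ h x)
    (hh : IntegrableOn h (Ioc a b)) :
    MonotoneOn (fun r => ∫ x in Ioo a r, h x) (Ioc a b) := by
  intro r _ t ht hrt
  refine setIntegral_mono_set (hh.mono_set fun x hx => ⟨hx.1, hx.2.le.trans ht.2⟩) ?_
    (Ioo_subset_Ioo_right hrt).eventuallyLE
  filter_upwards [ae_restrict_mem measurableSet_Ioo] with x hx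
  exact hh0 x ⟨hx.1, hx.2.le.trans ht.2⟩

lemma monotoneOn_rpow_mul_setIntegral_Ioo {h : ℝ → ℝ} {α b : ℝ} (hα : 0 ≤ α)
    (hh0 : ∀ x ∈ Ioc 0 b, 0 ≤ h x) (hh : IntegrableOn h (Ioc 0 b)) :
    MonotoneOn (fun r => r ^ α * ∫ x in Ioo 0 r, h x) (Ioc 0 b) :=
  ((monotoneOn_rpow_Ici_of_exponent_nonneg hα).mono fun _ hr => mem_Ici.2 hr.1.le).mul
    (monotoneOn_setIntegral_Ioo hh0 hh) (fun _ hr => rpow_nonneg hr.1.le α)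
    fun _ hr => setIntegral_nonneg measurableSet_Ioo fun x hx =>
      hh0 x ⟨hx.1, hx.2.le.trans hr.2⟩

lemma two_mul_sqrt_le_of_ge {N p : ℝ} (hp : 1 < p) (hN : N ≥ p + 4 * p / (p - 1)) :
    2 * √((N - 1) / (p - 1)) ≤ N - 2 - p := by
  have hp1 : 0 < p - 1 := by linarith
  have hN' : 4 * p ≤ (N - p) * (p - 1) := by
    rw [← div_le_iff₀ hp1]; linarith
  have hM : 0 < N - 2 - p := by nlinarith
  have hsq : 4 * ((N - 1) / (p - 1)) ≤ (N - 2 - p) ^ 2 := by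
    rw [← mul_div_assoc, div_le_iff₀ hp1]
    nlinarith
  calc 2 * √((N - 1) / (p - 1)) = √(4 * ((N - 1) / (p - 1))) := by
        rw [sqrt_mul zero_le_four, show (4 : ℝ) = 2 ^ 2 by norm_num, sqrt_sq zero_le_two]
    _ ≤ √((N - 2 - p) ^ 2) := sqrt_le_sqrt hsq
    _ = N - 2 - p := sqrt_sq hM.le

lemma rpow_le_of_mul_rpow_sub_one_le {r w p K α N : ℝ} (hr : 0 < r) (hw : 0 ≤ w) (hp : 0 < p)
    (hK : 0 < K) (hα : 0 ≤ α) (h : α * r ^ (α - 1) ≤ K * r ^ (N - 3) * w ^ p) :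
    (α / K) ^ (1 / p) * r ^ (-(1 / p) * (N - α - 2)) ≤ w := by
  have hpow : α / K * r ^ (α + 2 - N) ≤ w ^ p := by
    refine le_of_mul_le_mul_left ?_ (mul_pos hK (rpow_pos_of_pos hr (N - 3)))
    calc K * r ^ (N - 3) * (α / K * r ^ (α + 2 - N))
        = α * (r ^ (N - 3) * r ^ (α + 2 - N)) := by field_simp
      _ = α * r ^ (α - 1) := by rw [← rpow_add hr]; ring_nf
      _ ≤ K * r ^ (N - 3) * w ^ p := h
  calc (α / K) ^ (1 / p) * r ^ (-(1 / p) * (N - α - 2))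
      = (α / K * r ^ (α + 2 - N)) ^ (1 / p) := by
        rw [mul_rpow (by positivity) (by positivity), ← rpow_mul hr.le]; ring_nf
    _ ≤ (w ^ p) ^ (1 / p) := rpow_le_rpow (by positivity) hpow (by positivity)
    _ = w := by rw [← rpow_mul hw, mul_one_div_cancel hp.ne', rpow_one]

lemma not_integrableOn_Ioo_of_mul_inv_le {w : ℝ → ℝ} {C b : ℝ} (hC : 0 < C) (hb : 0 < b)
    (hw : ∀ r ∈ Ioo 0 b, C * r⁻¹ ≤ w r) : ¬ IntegrableOn w (Ioo 0 b) := by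
  intro hint
  have hinv : IntegrableOn (fun r : ℝ => C * r⁻¹) (Ioo 0 b) := by
    have hcont : ContinuousOn (fun r : ℝ => C * r⁻¹) (Ioo 0 b) :=
      continuousOn_const.mul (continuousOn_inv₀.mono fun r hr => hr.1.ne')
    refine hint.mono' (hcont.aestronglyMeasurable measurableSet_Ioo) ?_
    filter_upwards [ae_restrict_mem measurableSet_Ioo] with r hr
    rw [norm_of_nonneg (mul_nonneg hC.le (inv_nonneg.2 hr.1.le))]
    exact hw r hr
  have hrpow : IntegrableOn (fun r : ℝ => r ^ (-1 : ℝ)) (Ioo 0 b) := by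
    simpa [IntegrableOn, rpow_neg_one, hC.ne'] using hinv.const_mul C⁻¹
  exact lt_irrefl _ ((intervalIntegral.integrableOn_Ioo_rpow_iff hb).1 hrpow)

lemma tendsto_atTop_of_hasDerivAt_le_neg_mul_inv {u u' : ℝ → ℝ} {C b : ℝ} (hC : 0 < C)
    (hb : 0 < b) (hu : ∀ r ∈ Ioo 0 b, HasDerivAt u (u' r) r)
    (hu' : ∀ r ∈ Ioo 0 b, u' r ≤ -(C * r⁻¹)) : Tendsto u (𝓝[>] 0) atTop := by
  have hanti : AntitoneOn (fun r => u r + C * log r) (Ioo 0 b) := by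
    have hd : ∀ r ∈ Ioo 0 b, HasDerivAt (fun r => u r + C * log r) (u' r + C * r⁻¹) r :=
      fun r hr => (hu r hr).add ((hasDerivAt_log hr.1.ne').const_mul C)
    refine antitoneOn_of_hasDerivWithinAt_nonpos (f' := fun r => u' r + C * r⁻¹)
      (convex_Ioo 0 b) (fun r hr => (hd r hr).continuousAt.continuousWithinAt) ?_ ?_ <;>
      rw [interior_Ioo]
    · exact fun r hr => (hd r hr).hasDerivWithinAt
    · exact fun r hr => by linarith [hu' r hr]
  have hmid : b / 2 ∈ Ioo 0 b := ⟨half_pos hb, half_lt_self hb⟩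
  have hlog : Tendsto (fun r => u (b / 2) + C * log (b / 2) + -(C * log r)) (𝓝[>] 0) atTop :=
    tendsto_atTop_add_const_left _ _
      (tendsto_neg_atBot_atTop.comp (tendsto_log_nhdsGT_zero.const_mul_atBot hC))
  refine tendsto_atTop_mono' _ ?_ hlog
  filter_upwards [Ioo_mem_nhdsGT hmid.1] with r hr
  linarith [hanti ⟨hr.1, hr.2.trans hmid.2⟩ hmid hr.2.le]

theorem family_unbounded_general
    (N p : ℝ) (hp : 1 < p) (hN : N ≥ p + 4 * p / (p - 1))
    (h : ℝ → ℝ) (hh0 : ∀ r ∈ Ioc (0:ℝ) 1, 0 ≤ h r)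
    (hhL1 : IntegrableOn h (Ioc (0:ℝ) 1))
    (Φ Φ' : ℝ → ℝ)
    (hΦ : ∀ r ∈ Ioc (0:ℝ) 1,
      Φ r = r ^ (2 * Real.sqrt ((N - 1) / (p - 1))) * (1 + ∫ s in Ioo (0:ℝ) r, h s))
    (hΦ' : ∀ r ∈ Ioc (0:ℝ) 1, HasDerivAt Φ (Φ' r) r)
    (w : ℝ → ℝ) (hw : ∀ r ∈ Ioc (0:ℝ) 1, 0 < w r)
    (hweq : ∀ r ∈ Ioc (0:ℝ) 1, Φ' r = (N - 1) * r ^ (N - 3) * (w r) ^ p) :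
    (∀ r ∈ Ioc (0:ℝ) 1,
      ((2 / (N - 1)) * Real.sqrt ((N - 1) / (p - 1))) ^ (1 / p) *
        r ^ (-(1 / p) * (N - 2 * Real.sqrt ((N - 1) / (p - 1)) - 2)) ≤ w r) ∧
    ¬ IntegrableOn w (Ioo (0:ℝ) 1) ∧
    (∀ u : ℝ → ℝ, (∀ r ∈ Ioo (0:ℝ) 1, HasDerivAt u (-(w r)) r) →
      Tendsto u (nhdsWithin 0 (Ioi (0:ℝ))) atTop) := by
  set α := 2 * √((N - 1) / (p - 1))
  have hαN : α ≤ N - 2 - p := two_mul_sqrt_le_of_ge hp hN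
  have hp0 : 0 < p := by linarith
  have hN1 : 0 < N - 1 := by linarith [sqrt_nonneg ((N - 1) / (p - 1))]
  have hsqrt : 0 < √((N - 1) / (p - 1)) := sqrt_pos.2 (div_pos hN1 (sub_pos.2 hp))
  have hα0 : 0 < α := mul_pos two_pos hsqrt
  have hΦ'_ge (r : ℝ) (hr : r ∈ Ioc (0:ℝ) 1) : α * r ^ (α - 1) ≤ Φ' r :=
    (hΦ' r hr).le_of_monotoneOn_sub (hasDerivAt_rpow_const (Or.inl hr.1.ne'))
      (accPt_Ioc_of_mem hr) <| (monotoneOn_rpow_mul_setIntegral_Ioo hα0.le hh0 hhL1).congr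
        fun s hs => by rw [hΦ s hs]; ring
  set C := (2 / (N - 1) * √((N - 1) / (p - 1))) ^ (1 / p)
  have hC : 0 < C := rpow_pos_of_pos (mul_pos (div_pos two_pos hN1) hsqrt) _
  have hbound (r : ℝ) (hr : r ∈ Ioc (0:ℝ) 1) : C * r ^ (-(1 / p) * (N - α - 2)) ≤ w r := by
    have := rpow_le_of_mul_rpow_sub_one_le hr.1 (hw r hr).le hp0 hN1 hα0.le
      (hweq r hr ▸ hΦ'_ge r hr)
    convert this using 3
    exact div_mul_eq_mul_div 2 (N - 1) _
  have hinv (r : ℝ) (hr : r ∈ Ioo (0:ℝ) 1) : C * r⁻¹ ≤ w r := by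
    have he : -(1 / p) * (N - α - 2) ≤ -1 := by
      rw [neg_mul, neg_le_neg_iff, one_div, le_inv_mul_iff₀ hp0]; linarith
    refine le_trans ?_ (hbound r ⟨hr.1, hr.2.le⟩)
    rw [← rpow_neg_one]
    exact mul_le_mul_of_nonneg_left (rpow_le_rpow_of_exponent_ge hr.1 hr.2.le he) hC.le
  exact ⟨hbound, not_integrableOn_Ioo_of_mul_inv_le hC one_pos hinv, fun u hu =>
    tendsto_atTop_of_hasDerivAt_le_neg_mul_inv hC one_pos hu fun r hr => neg_le_neg (hinv r hr)⟩

/-- With `Φ(r) = r^{2√((N-1)/(p-1))}(1 + ∫₀ʳ h)` and `|u_r| = w > 0` defined by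
`Φ'(r) = (N-1) r^{N-3} w(r)^p`, for `N ≥ p + 4p/(p-1)` one has the lower bound
`w(r) ≥ ((2/(N-1))√((N-1)/(p-1)))^{1/p} r^{-(1/p)(N - 2√((N-1)/(p-1)) - 2)}`;
consequently `w ∉ L¹(0,1)` and any primitive `u` with `u_r = -w` blows up at `0`. -/
theorem family_unbounded
    (N p : ℝ) (hp : 1 < p) (hN : N ≥ p + 4 * p / (p - 1))
    (h : ℝ → ℝ) (hh0 : ∀ r ∈ Ioc (0:ℝ) 1, 0 ≤ h r)
    (hhC2 : ContDiffOn ℝ 2 h (Ioc (0:ℝ) 1))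
    (hhL1 : IntegrableOn h (Ioc (0:ℝ) 1))
    (Φ Φ' : ℝ → ℝ)
    (hΦ : ∀ r ∈ Ioc (0:ℝ) 1,
      Φ r = r ^ (2 * Real.sqrt ((N - 1) / (p - 1))) * (1 + ∫ s in Ioo (0:ℝ) r, h s))
    (hΦ' : ∀ r ∈ Ioc (0:ℝ) 1, HasDerivAt Φ (Φ' r) r)
    (w : ℝ → ℝ) (hw : ∀ r ∈ Ioc (0:ℝ) 1, 0 < w r)
    (hweq : ∀ r ∈ Ioc (0:ℝ) 1, Φ' r = (N - 1) * r ^ (N - 3) * (w r) ^ p) :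
    (∀ r ∈ Ioc (0:ℝ) 1,
      ((2 / (N - 1)) * Real.sqrt ((N - 1) / (p - 1))) ^ (1 / p) *
        r ^ (-(1 / p) * (N - 2 * Real.sqrt ((N - 1) / (p - 1)) - 2)) ≤ w r) ∧
    ¬ IntegrableOn w (Ioo (0:ℝ) 1) ∧
    (∀ u : ℝ → ℝ, (∀ r ∈ Ioo (0:ℝ) 1, HasDerivAt u (-(w r)) r) →
      Tendsto u (nhdsWithin 0 (Ioi (0:ℝ))) atTop) :=
  family_unbounded_general N p hp hN h hh0 hhL1 Φ Φ' hΦ hΦ' w hw hweq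
end

section
/- Let p > 1, N ≥ p + 4p/(p-1), and let Φ ∈ C¹(0,1) satisfy Φ' > 0 and ((p-1)/(N-1)) r² Φ'(r) ≥ 4Φ(r)²/Φ'(r) for all r ∈ (0,1). Define w(r) > 0 by Φ'(r) = (N-1) r^{N-3} w(r)^p. Then for every ξ ∈ C_c^∞(0,1): (p-1)∫₀¹ r^{N-1} w(r)^p ξ'(r)² dr ≥ (N-1)∫₀¹ r^{N-3} w(r)^p ξ(r)² dr. -/
open Real MeasureTheory Set

/-- Semi-stability inequality: if `Φ ∈ C¹(0,1)`, `Φ' > 0`, and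
`((p-1)/(N-1)) r² Φ' ≥ 4Φ²/Φ'` pointwise, and `w > 0` is defined by
`Φ' = (N-1) r^{N-3} w^p`, then for every smooth `ξ` compactly supported in `(0,1)`:
`(p-1)∫ r^{N-1} wᵖ ξ'² ≥ (N-1)∫ r^{N-3} wᵖ ξ²`. -/
theorem semistability_inequality
    (N p : ℝ) (hp : 1 < p) (hN : N ≥ p + 4 * p / (p - 1))
    (Φ Φ' : ℝ → ℝ)
    (hΦ : ∀ r ∈ Ioo (0:ℝ) 1, HasDerivAt Φ (Φ' r) r)
    (hΦ'cont : ContinuousOn Φ' (Ioo (0:ℝ) 1))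
    (hΦ'pos : ∀ r ∈ Ioo (0:ℝ) 1, 0 < Φ' r)
    (hineq : ∀ r ∈ Ioo (0:ℝ) 1,
      4 * (Φ r) ^ 2 / Φ' r ≤ ((p - 1) / (N - 1)) * r ^ 2 * Φ' r)
    (w : ℝ → ℝ) (hw : ∀ r ∈ Ioo (0:ℝ) 1, 0 < w r)
    (hweq : ∀ r ∈ Ioo (0:ℝ) 1, Φ' r = (N - 1) * r ^ (N - 3) * (w r) ^ p)
    (ξ : ℝ → ℝ) (hξ : ContDiff ℝ (⊤ : ℕ∞) ξ) (hsupp : tsupport ξ ⊆ Ioo (0:ℝ) 1) :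
    (N - 1) * ∫ r in Ioo (0:ℝ) 1, r ^ (N - 3) * (w r) ^ p * (ξ r) ^ 2 ≤
      (p - 1) * ∫ r in Ioo (0:ℝ) 1, r ^ (N - 1) * (w r) ^ p * (deriv ξ r) ^ 2 := by
  have hp0 : 0 < p - 1 := by linarith
  have hN1 : 1 < N := by
    have h4 : 0 < 4 * p / (p - 1) := by positivity
    nlinarith
  have hN0 : 0 < N - 1 := by linarith
  -- compact support
  have hKc : IsCompact (tsupport ξ) :=
    Metric.isCompact_of_isClosed_isBounded (isClosed_tsupport ξ)
      ((Metric.isBounded_Ioo 0 1).subset hsupp)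
  set K' : Set ℝ := tsupport ξ ∪ {1/2} with hK'def
  have hK'c : IsCompact K' := hKc.union isCompact_singleton
  have hK'ne : K'.Nonempty := ⟨1/2, Or.inr rfl⟩
  have hK'sub : K' ⊆ Ioo (0:ℝ) 1 := by
    refine union_subset hsupp ?_
    intro x hx
    simp only [mem_singleton_iff] at hx
    subst hx; constructor <;> norm_num
  have ha₀ : sInf K' ∈ K' := hK'c.sInf_mem hK'ne
  have hb₀ : sSup K' ∈ K' := hK'c.sSup_mem hK'ne
  have ha₀I : sInf K' ∈ Ioo (0:ℝ) 1 := hK'sub ha₀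
  have hb₀I : sSup K' ∈ Ioo (0:ℝ) 1 := hK'sub hb₀
  set a : ℝ := sInf K' / 2 with hadef
  set b : ℝ := (sSup K' + 1) / 2 with hbdef
  have ha0 : 0 < a := by simp only [hadef]; linarith [ha₀I.1]
  have haa : a < sInf K' := by simp only [hadef]; linarith [ha₀I.1]
  have hbb : sSup K' < b := by simp only [hbdef]; linarith [hb₀I.2]
  have hb1 : b < 1 := by simp only [hbdef]; linarith [hb₀I.2]
  have hab : a < b := by
    have := csInf_le_csSup hK'ne hK'c.bddBelow hK'c.bddAbove
    linarith
  have hKab : tsupport ξ ⊆ Ioo a b := by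
    intro r hr
    exact ⟨lt_of_lt_of_le haa (csInf_le hK'c.bddBelow (Or.inl hr)),
      lt_of_le_of_lt (le_csSup hK'c.bddAbove (Or.inl hr)) hbb⟩
  have hIabsub : Ioo a b ⊆ Ioo (0:ℝ) 1 := fun r hr => ⟨ha0.trans hr.1, hr.2.trans hb1⟩
  have hIccsub : Icc a b ⊆ Ioo (0:ℝ) 1 := by
    intro r hr
    exact ⟨ha0.trans_le hr.1, lt_of_le_of_lt hr.2 hb1⟩
  -- vanishing of ξ and deriv ξ outside (a,b)
  have hξ0 : ∀ r, r ∉ Ioo a b → ξ r = 0 := fun r hr =>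
    image_eq_zero_of_notMem_tsupport (fun hK => hr (hKab hK))
  have hξ'0 : ∀ r, r ∉ Ioo a b → deriv ξ r = 0 := by
    intro r hr
    by_contra h
    exact hr (hKab (support_deriv_subset (Function.mem_support.mpr h)))
  -- reduction of set integrals to interval integrals
  have key : ∀ f : ℝ → ℝ, (∀ r, r ∉ Ioo a b → f r = 0) →
      ∫ r in Ioo (0:ℝ) 1, f r = ∫ r in a..b, f r := by
    intro f hf
    rw [intervalIntegral.integral_of_le hab.le, ← integral_Ioc_eq_integral_Ioo (x := (0:ℝ)),
      ← integral_indicator measurableSet_Ioc, ← integral_indicator measurableSet_Ioc]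
    congr 1
    funext r
    by_cases h1 : r ∈ Ioo a b
    · have h2 : r ∈ Ioc (0:ℝ) 1 := Ioo_subset_Ioc_self (hIabsub h1)
      have h3 : r ∈ Ioc a b := Ioo_subset_Ioc_self h1
      simp [indicator_apply, h2, h3]
    · simp only [indicator_apply]
      split_ifs <;> simp [hf r h1]
  -- continuity facts
  have cξ : Continuous ξ := hξ.continuous
  have cξ' : Continuous (deriv ξ) := hξ.continuous_deriv (by simp)
  have cΦ : ContinuousOn Φ (Icc a b) := fun r hr =>
    ((hΦ r (hIccsub hr)).continuousAt).continuousWithinAt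
  have cΦ' : ContinuousOn Φ' (Icc a b) := hΦ'cont.mono hIccsub
  have hΦ'posI : ∀ r ∈ Icc a b, 0 < Φ' r := fun r hr => hΦ'pos r (hIccsub hr)
  -- auxiliary functions
  set g : ℝ → ℝ := fun r => Φ' r * ξ r ^ 2 with hgdef
  set q : ℝ → ℝ := fun r => Φ r * (2 * ξ r * deriv ξ r) with hqdef
  set H : ℝ → ℝ := fun r => Φ r ^ 2 / Φ' r * (deriv ξ r) ^ 2 with hHdef
  set G : ℝ → ℝ := fun r => ((p - 1) / (N - 1)) * r ^ 2 * Φ' r * (deriv ξ r) ^ 2 with hGdef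
  have uIccab : uIcc a b = Icc a b := uIcc_of_le hab.le
  -- interval integrabilities
  have ig : IntervalIntegrable g volume a b := by
    apply ContinuousOn.intervalIntegrable
    rw [uIccab]
    exact cΦ'.mul ((cξ.pow 2).continuousOn)
  have iq : IntervalIntegrable q volume a b := by
    apply ContinuousOn.intervalIntegrable
    rw [uIccab]
    exact cΦ.mul ((continuous_const.mul cξ |>.mul cξ').continuousOn)
  have iH : IntervalIntegrable H volume a b := by
    apply ContinuousOn.intervalIntegrable
    rw [uIccab]
    exact ((cΦ.pow 2).div cΦ' (fun r hr => (hΦ'posI r hr).ne')).mul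
      ((cξ'.pow 2).continuousOn)
  have iG : IntervalIntegrable G volume a b := by
    apply ContinuousOn.intervalIntegrable
    rw [uIccab]
    exact ((continuousOn_const.mul (continuous_pow 2).continuousOn).mul cΦ').mul
      ((cξ'.pow 2).continuousOn)
  -- integration by parts
  have hIBP : (∫ r in a..b, (g r + q r)) = 0 := by
    have hd : ∀ r ∈ uIcc a b, HasDerivAt (fun s => Φ s * ξ s ^ 2) (g r + q r) r := by
      intro r hr
      rw [uIccab] at hr
      have h1 : HasDerivAt (fun s => ξ s ^ 2) (2 * ξ r * deriv ξ r) r := by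
        have : HasDerivAt (fun s => ξ s ^ 2) (((2:ℕ):ℝ) * ξ r ^ (2 - 1) * deriv ξ r) r :=
          ((hξ.differentiable (by simp) r).hasDerivAt).fun_pow 2
        convert this using 1
        norm_num
      exact (hΦ r (hIccsub hr)).mul h1
    have := intervalIntegral.integral_eq_sub_of_hasDerivAt hd (ig.add iq)
    rw [this, hξ0 a (fun h => lt_irrefl a h.1), hξ0 b (fun h => lt_irrefl b h.2)]
    ring
  have hsplit : (∫ r in a..b, g r) = - ∫ r in a..b, q r := by
    have := intervalIntegral.integral_add ig iq
    rw [hIBP] at this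
    linarith
  -- pointwise AM-GM
  have hptw : ∀ r ∈ Icc a b, -q r ≤ (1/2) * g r + 2 * H r := by
    intro r hr
    have hpos := hΦ'posI r hr
    have h1 : (-q r) * Φ' r ≤ ((1/2) * g r + 2 * H r) * Φ' r := by
      have hd : 2 * H r * Φ' r = 2 * (Φ r ^ 2 * (deriv ξ r) ^ 2) := by
        simp only [hHdef]
        field_simp
        try ring
      rw [add_mul, hd]
      simp only [hgdef, hqdef]
      nlinarith [sq_nonneg (Φ' r * ξ r + 2 * Φ r * deriv ξ r)]
    exact le_of_mul_le_mul_right h1 hpos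
  have hmono1 : (∫ r in a..b, -q r) ≤ ∫ r in a..b, ((1/2) * g r + 2 * H r) :=
    intervalIntegral.integral_mono_on hab.le iq.neg
      ((ig.const_mul _).add (iH.const_mul _)) hptw
  have hrhs : (∫ r in a..b, ((1/2) * g r + 2 * H r))
      = (1/2) * (∫ r in a..b, g r) + 2 * ∫ r in a..b, H r := by
    rw [intervalIntegral.integral_add (ig.const_mul _) (iH.const_mul _),
      intervalIntegral.integral_const_mul, intervalIntegral.integral_const_mul]
  have hHardy : (∫ r in a..b, g r) ≤ ∫ r in a..b, 4 * H r := by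
    rw [intervalIntegral.integral_const_mul]
    rw [intervalIntegral.integral_neg] at hmono1
    rw [hrhs] at hmono1
    linarith [hsplit ▸ hmono1]
  -- compare 4H with G pointwise
  have hptw2 : ∀ r ∈ Icc a b, 4 * H r ≤ G r := by
    intro r hr
    have h1 := hineq r (hIccsub hr)
    have h2 : 4 * H r = (4 * Φ r ^ 2 / Φ' r) * (deriv ξ r) ^ 2 := by
      simp only [hHdef]; ring
    rw [h2]
    simp only [hGdef]
    exact mul_le_mul_of_nonneg_right h1 (sq_nonneg _)
  have hmono2 : (∫ r in a..b, 4 * H r) ≤ ∫ r in a..b, G r :=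
    intervalIntegral.integral_mono_on hab.le (iH.const_mul _) iG hptw2
  -- rewrite the goal
  have hL : (N - 1) * (∫ r in Ioo (0:ℝ) 1, r ^ (N - 3) * (w r) ^ p * (ξ r) ^ 2)
      = ∫ r in a..b, g r := by
    have h1 : (∫ r in Ioo (0:ℝ) 1, r ^ (N - 3) * (w r) ^ p * (ξ r) ^ 2)
        = ∫ r in a..b, r ^ (N - 3) * (w r) ^ p * (ξ r) ^ 2 :=
      key _ (fun r hr => by rw [hξ0 r hr]; ring)
    rw [h1, ← intervalIntegral.integral_const_mul]
    apply intervalIntegral.integral_congr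
    rw [uIccab]
    intro r hr
    have := hweq r (hIccsub hr)
    simp only [hgdef]
    rw [this]; ring
  have hR : (p - 1) * (∫ r in Ioo (0:ℝ) 1, r ^ (N - 1) * (w r) ^ p * (deriv ξ r) ^ 2)
      = ∫ r in a..b, G r := by
    have h1 : (∫ r in Ioo (0:ℝ) 1, r ^ (N - 1) * (w r) ^ p * (deriv ξ r) ^ 2)
        = ∫ r in a..b, r ^ (N - 1) * (w r) ^ p * (deriv ξ r) ^ 2 :=
      key _ (fun r hr => by rw [hξ'0 r hr]; ring)
    rw [h1, ← intervalIntegral.integral_const_mul]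
    apply intervalIntegral.integral_congr
    rw [uIccab]
    intro r hr
    have hr0 : (0:ℝ) < r := (hIccsub hr).1
    have hwr := hweq r (hIccsub hr)
    have hpow : r ^ (N - 1) = r ^ (2:ℕ) * r ^ (N - 3) := by
      rw [← Real.rpow_natCast r 2, ← Real.rpow_add hr0]
      congr 1
      ring
    simp only [hGdef]
    rw [hpow, hwr]
    field_simp
  rw [hL, hR]
  exact hHardy.trans hmono2
end

section
/- Let N ≥ 1, p > 1, and let u be a radial solution on (0,1] of the p-Laplace equation -(r^{N-1}|u_r|^{p-2}u_r)' = r^{N-1} g(u) with u_r < 0, g ≥ 0 nonnegative nondecreasing locally Lipschitz, and g convex with g' ≥ 0, and assume u is semi-stable, i.e. ∫₀¹ r^{N-1} g'(u(r)) ξ(r)² dr ≤ (p-1)∫₀¹ r^{N-1} |u_r(r)|^{p-2} ξ'(r)² dr for all ξ ∈ C_c¹(0,1). Then there is a constant M depending only on N and p such that g'(u(r)) ≤ M |u_r(r)|^{p-2} / r² for all r ∈ (0,1]. -/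
/-!
The flux `F(s) = s^{N-1} |u_r(s)|^{p-1}` has `F' = s^{N-1} g(u) ≥ 0`, so it is nondecreasing. As
`u` decreases and `g` is nondecreasing, `g(u)` is nonincreasing, and the mean value theorem on
`[s/2, s]` gives `s F'(s) = s^N g(u(s)) ≤ 2^N F(s)`; hence `F(s) s^{-(N-1+2^N)}` is nonincreasing.
Together these pinch `|u_r(s)|^{p-1}` between `(r/s)^{-2^N}` and `(r/s)^{N-1}` times
`|u_r(r)|^{p-1}` for `s ≤ r`, so `|u_r(s)|^{p-2} ≤ (r/s)^α |u_r(r)|^{p-2}` with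
`α = (N-1+2^N)|p-2|/(p-1)`.

Fix a bump `ζ` supported in `(0,1)` and test semi-stability with `ξ(s) = ζ(s/r)`, supported in
`(0, r)`. By convexity `g'(u)` is nonincreasing, so the left side is at least
`g'(u(r)) r^N ∫ t^{N-1} ζ²`, while the gradient comparison bounds the right side by
`(p-1) |u_r(r)|^{p-2} r^{N-2} ∫ t^{N-1-α} ζ'²`; both integrals depend only on `N` and `p`.
-/

open Real MeasureTheory Set

theorem Convex.monotoneOn_of_hasDerivAt_nonneg {D : Set ℝ} (hD : Convex ℝ D)
    {f f' : ℝ → ℝ} (hf : ∀ x ∈ D, HasDerivAt f (f' x) x) (hf' : ∀ x ∈ D, 0 ≤ f' x) :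
    MonotoneOn f D :=
  monotoneOn_of_hasDerivWithinAt_nonneg hD
    (fun x hx => (hf x hx).continuousAt.continuousWithinAt)
    (fun x hx => (hf x (interior_subset hx)).hasDerivWithinAt)
    (fun x hx => hf' x (interior_subset hx))

theorem Convex.antitoneOn_of_hasDerivAt_nonpos {D : Set ℝ} (hD : Convex ℝ D)
    {f f' : ℝ → ℝ} (hf : ∀ x ∈ D, HasDerivAt f (f' x) x) (hf' : ∀ x ∈ D, f' x ≤ 0) :
    AntitoneOn f D :=
  antitoneOn_of_hasDerivWithinAt_nonpos hD
    (fun x hx => (hf x hx).continuousAt.continuousWithinAt)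
    (fun x hx => (hf x (interior_subset hx)).hasDerivWithinAt)
    (fun x hx => hf' x (interior_subset hx))

theorem ConvexOn.monotone_of_hasDerivAt {g g' : ℝ → ℝ} (hg : ConvexOn ℝ univ g)
    (hg' : ∀ x, HasDerivAt g (g' x) x) : Monotone g' := by
  intro a b hab
  have h :=
    hg.monotoneOn_deriv (fun x _ => (hg' x).differentiableAt) (mem_univ a) (mem_univ b) hab
  rwa [(hg' a).deriv, (hg' b).deriv] at h

theorem Convex.antitoneOn_mul_rpow_neg {D : Set ℝ} (hD : Convex ℝ D) (hD0 : D ⊆ Ioi 0)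
    {f f' : ℝ → ℝ} {κ : ℝ} (hf : ∀ x ∈ D, HasDerivAt f (f' x) x)
    (hκ : ∀ x ∈ D, x * f' x ≤ κ * f x) : AntitoneOn (fun x => f x * x ^ (-κ)) D := by
  refine hD.antitoneOn_of_hasDerivAt_nonpos
    (fun x hx => (hf x hx).mul (hasDerivAt_rpow_const (Or.inl (hD0 hx).ne'))) fun x hxD => ?_
  have hx : 0 < x := hD0 hxD
  have key : f' x * x ^ (-κ) + f x * (-κ * x ^ (-κ - 1)) =
      (x * f' x - κ * f x) * x ^ (-κ - 1) := by
    rw [rpow_sub_one hx.ne']; field_simp; ring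
  rw [key]
  exact mul_nonpos_of_nonpos_of_nonneg (by linarith [hκ x hxD]) (rpow_nonneg hx.le _)

theorem rpow_le_div_rpow_mul_of_weighted_le {a b s r q m k : ℝ} (ha : 0 < a) (hb : 0 < b)
    (hs : 0 < s) (hsr : s ≤ r) (hq : 0 < q) (hm : 0 ≤ m) (hk : 0 ≤ k)
    (hup : s ^ m * a ^ q ≤ r ^ m * b ^ q) (hlow : r ^ (-k) * b ^ q ≤ s ^ (-k) * a ^ q) (e : ℝ) :
    a ^ e ≤ (r / s) ^ ((m + k) * |e| / q) * b ^ e := by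
  set ρ := r / s
  have hρ : 1 ≤ ρ := (one_le_div hs).2 hsr
  have hρ0 : 0 < ρ := one_pos.trans_le hρ
  have hup : a ^ q ≤ ρ ^ m * b ^ q := by
    rw [div_rpow (hs.le.trans hsr) hs.le, div_mul_eq_mul_div,
      le_div_iff₀ (rpow_pos_of_pos hs m)]
    linarith
  have hlow : ρ ^ (-k) * b ^ q ≤ a ^ q := by
    rw [div_rpow (hs.le.trans hsr) hs.le, div_mul_eq_mul_div,
      div_le_iff₀ (rpow_pos_of_pos hs _)]
    linarith
  have hpow : ∀ x : ℝ, 0 < x → x ^ e = (x ^ q) ^ (e / q) := fun x hx => by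
    rw [← rpow_mul hx.le, mul_div_cancel₀ _ hq.ne']
  have hsplit : ∀ c : ℝ, (ρ ^ c * b ^ q) ^ (e / q) = ρ ^ (c * e / q) * b ^ e := fun c => by
    rw [mul_rpow (by positivity) (by positivity), ← rpow_mul hρ0.le, ← rpow_mul hb.le,
      mul_div_cancel₀ _ hq.ne', mul_div_assoc]
  rcases le_total 0 e with he | he
  · calc a ^ e = (a ^ q) ^ (e / q) := hpow a ha
      _ ≤ (ρ ^ m * b ^ q) ^ (e / q) := by gcongr
      _ = ρ ^ (m * e / q) * b ^ e := hsplit m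
      _ ≤ ρ ^ ((m + k) * |e| / q) * b ^ e := by
        rw [abs_of_nonneg he]
        gcongr
        linarith
  · calc a ^ e = (a ^ q) ^ (e / q) := hpow a ha
      _ ≤ (ρ ^ (-k) * b ^ q) ^ (e / q) :=
        rpow_le_rpow_of_nonpos (by positivity) hlow (div_nonpos_of_nonpos_of_nonneg he hq.le)
      _ = ρ ^ (-k * e / q) * b ^ e := hsplit (-k)
      _ ≤ ρ ^ ((m + k) * |e| / q) * b ^ e := by
        refine mul_le_mul_of_nonneg_right (rpow_le_rpow_of_exponent_le hρ ?_) (by positivity)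
        rw [abs_of_nonpos he]
        exact div_le_div_of_nonneg_right (by nlinarith) hq.le

theorem rpow_mul_le_two_rpow_mul_of_hasDerivAt {F φ : ℝ → ℝ} {N : ℝ} (hN : 1 ≤ N)
    (hF : ∀ s ∈ Ioc (0 : ℝ) 1, HasDerivAt F (s ^ (N - 1) * φ s) s)
    (hF0 : ∀ s ∈ Ioc (0 : ℝ) 1, 0 ≤ F s) (hφ : AntitoneOn φ (Ioc 0 1))
    (hφ0 : ∀ s ∈ Ioc (0 : ℝ) 1, 0 ≤ φ s) {s : ℝ} (hs : s ∈ Ioc (0 : ℝ) 1) :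
    s ^ N * φ s ≤ 2 ^ N * F s := by
  obtain ⟨hs0, hs1⟩ := hs
  have hsub : Icc (s / 2) s ⊆ Ioc 0 1 := fun t ht => ⟨by linarith [ht.1], ht.2.trans hs1⟩
  have hslope : ∀ t ∈ interior (Icc (s / 2) s), (s / 2) ^ (N - 1) * φ s ≤ deriv F t := by
    intro t ht
    rw [interior_Icc] at ht
    have htI : t ∈ Ioc 0 1 := hsub (Ioo_subset_Icc_self ht)
    rw [(hF t htI).deriv]
    calc (s / 2) ^ (N - 1) * φ s ≤ t ^ (N - 1) * φ s := by
          gcongr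
          · exact hφ0 s ⟨hs0, hs1⟩
          · exact ht.1.le
      _ ≤ t ^ (N - 1) * φ t := by
          have := htI.1
          gcongr
          exact hφ htI ⟨hs0, hs1⟩ ht.2.le
  have hmvt := (convex_Icc (s / 2) s).mul_sub_le_image_sub_of_le_deriv
    (fun t ht => (hF t (hsub ht)).continuousAt.continuousWithinAt)
    (fun t ht => (hF t (hsub (interior_subset ht))).differentiableAt.differentiableWithinAt)
    hslope (s / 2) (left_mem_Icc.2 (by linarith)) s (right_mem_Icc.2 (by linarith))
    (by linarith)
  have hsN : s ^ N = 2 ^ N * ((s / 2) ^ (N - 1) * (s - s / 2)) := by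
    rw [rpow_sub_one (by positivity), show s - s / 2 = s / 2 by ring,
      div_mul_cancel₀ _ (by positivity), div_rpow hs0.le zero_le_two]
    field_simp
  rw [hsN, mul_assoc]
  gcongr 2 ^ N * ?_
  linarith [hF0 (s / 2) (hsub (left_mem_Icc.2 (by linarith))), hmvt]

theorem abs_deriv_rpow_le {N p : ℝ} {g u u' : ℝ → ℝ} (hN : 1 ≤ N) (hp : 1 < p)
    (hg0 : ∀ x, 0 ≤ g x) (hg : Monotone g)
    (hu : ∀ r ∈ Ioc (0 : ℝ) 1, HasDerivAt u (u' r) r) (hu' : ∀ r ∈ Ioc (0 : ℝ) 1, u' r < 0)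
    (hflux : ∀ r ∈ Ioc (0 : ℝ) 1,
      HasDerivAt (fun s => s ^ (N - 1) * |u' s| ^ (p - 1)) (r ^ (N - 1) * g (u r)) r)
    {s r : ℝ} (hs : 0 < s) (hsr : s ≤ r) (hr : r ≤ 1) :
    |u' s| ^ (p - 2) ≤ (r / s) ^ ((N - 1 + 2 ^ N) * |p - 2| / (p - 1)) * |u' r| ^ (p - 2) := by
  set F := fun s => s ^ (N - 1) * |u' s| ^ (p - 1)
  have hsI : s ∈ Ioc (0 : ℝ) 1 := ⟨hs, hsr.trans hr⟩
  have hrI : r ∈ Ioc (0 : ℝ) 1 := ⟨hs.trans_le hsr, hr⟩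
  have hF0 : ∀ x ∈ Ioc (0 : ℝ) 1, 0 ≤ F x := fun x hx => by have := hx.1; positivity
  have hFmono : MonotoneOn F (Ioc 0 1) := (convex_Ioc 0 1).monotoneOn_of_hasDerivAt_nonneg hflux
    fun x hx => mul_nonneg (rpow_nonneg hx.1.le _) (hg0 _)
  have huanti : AntitoneOn u (Ioc 0 1) :=
    (convex_Ioc 0 1).antitoneOn_of_hasDerivAt_nonpos hu fun x hx => (hu' x hx).le
  have hFanti : AntitoneOn (fun x => F x * x ^ (-(N - 1 + 2 ^ N))) (Ioc 0 1) := by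
    refine (convex_Ioc 0 1).antitoneOn_mul_rpow_neg (fun x hx => hx.1) hflux fun x hx => ?_
    have hbound := rpow_mul_le_two_rpow_mul_of_hasDerivAt hN hflux hF0 (hg.comp_antitoneOn huanti)
      (fun _ _ => hg0 _) hx
    have hxN : x * (x ^ (N - 1) * g (u x)) = x ^ N * g (u x) := by
      rw [← mul_assoc, ← rpow_one_add' hx.1.le (by linarith), add_sub_cancel]
    have := hF0 x hx
    rw [hxN]
    nlinarith
  have hweight : ∀ x > 0, F x * x ^ (-(N - 1 + 2 ^ N)) = x ^ (-2 ^ N : ℝ) * |u' x| ^ (p - 1) :=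
    fun x hx => by
      rw [mul_comm, ← mul_assoc, ← rpow_add hx]
      ring_nf
  have hlow : F r * r ^ (-(N - 1 + 2 ^ N)) ≤ F s * s ^ (-(N - 1 + 2 ^ N)) := hFanti hsI hrI hsr
  rw [hweight s hs, hweight r (hs.trans_le hsr)] at hlow
  exact rpow_le_div_rpow_mul_of_weighted_le (abs_pos.2 (hu' s hsI).ne)
    (abs_pos.2 (hu' r hrI).ne) hs hsr (by linarith) (by linarith) (by positivity)
    (hFmono hsI hrI hsr) hlow (p - 2)

section TestFunction

variable {w : ℝ → ℝ}

theorem continuous_rpow_mul_of_zero_notMem_tsupport (hw : Continuous w)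
    (h0 : (0 : ℝ) ∉ tsupport w) (β : ℝ) : Continuous fun t => t ^ β * w t := by
  refine continuous_iff_continuousAt.2 fun x => ?_
  rcases eq_or_ne x 0 with rfl | hx
  · refine Filter.EventuallyEq.continuousAt (y := 0) ?_
    filter_upwards [notMem_tsupport_iff_eventuallyEq.1 h0] with t ht
    simp [show w t = 0 from ht]
  · exact (continuousAt_rpow_const x β (Or.inl hx)).mul hw.continuousAt

theorem tsupport_comp_div_subset (hw : tsupport w ⊆ Ioo 0 1) {r : ℝ} (hr : 0 < r) :
    tsupport (fun s => w (s / r)) ⊆ Ioo 0 r :=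
  (tsupport_comp_subset_preimage w (continuous_id.div_const r)).trans fun _ hs =>
    ⟨(div_pos_iff_of_pos_right hr).1 (hw hs).1, (div_lt_one hr).1 (hw hs).2⟩

theorem eq_zero_of_nonpos_of_tsupport_subset (hw : tsupport w ⊆ Ioo 0 1) {t : ℝ} (ht : t ≤ 0) :
    w t = 0 :=
  image_eq_zero_of_notMem_tsupport fun h => (hw h).1.not_ge ht

theorem integrable_rpow_mul (hwc : Continuous w) {b : ℝ} (hw : tsupport w ⊆ Ioo 0 b) (β : ℝ) :
    Integrable fun t => t ^ β * w t :=
  (continuous_rpow_mul_of_zero_notMem_tsupport hwc (fun h => (hw h).1.false) β)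
    |>.integrable_of_hasCompactSupport <| HasCompactSupport.mul_left <|
      isCompact_Icc.of_isClosed_subset (isClosed_tsupport w) (hw.trans Ioo_subset_Icc_self)

theorem rpow_mul_sq_nonneg (hw : tsupport w ⊆ Ioo 0 1) (β t : ℝ) : 0 ≤ t ^ β * w t ^ 2 := by
  rcases le_or_gt t 0 with ht | ht
  · simp [eq_zero_of_nonpos_of_tsupport_subset hw ht]
  · positivity

theorem tsupport_sq : tsupport (fun t => w t ^ 2) = tsupport w := by
  simp only [tsupport, Function.support_pow w two_ne_zero]

theorem integral_rpow_mul_sq_pos (hwc : Continuous w) (hw : tsupport w ⊆ Ioo 0 1) {c : ℝ}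
    (hc : w c ≠ 0) (β : ℝ) : 0 < ∫ t, t ^ β * w t ^ 2 := by
  have hc0 : 0 < c := (hw (subset_tsupport w hc)).1
  have hw2 : tsupport (fun t => w t ^ 2) ⊆ Ioo 0 1 := tsupport_sq.trans_subset hw
  exact integral_pos_of_integrable_nonneg_nonzero
    (continuous_rpow_mul_of_zero_notMem_tsupport (hwc.pow 2) (fun h => (hw2 h).1.false) β)
    (integrable_rpow_mul (hwc.pow 2) hw2 β) (rpow_mul_sq_nonneg hw β) (x := c) (by positivity)

theorem integral_rpow_mul_comp_div (hw : ∀ t ≤ 0, w t = 0) (β : ℝ) {r : ℝ} (hr : 0 < r) :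
    ∫ s, s ^ β * w (s / r) = r ^ (β + 1) * ∫ t, t ^ β * w t := by
  have hsplit : ∀ s, s ^ β * w (s / r) = r ^ β * ((s / r) ^ β * w (s / r)) := fun s => by
    rcases le_or_gt s 0 with hs | hs
    · simp [hw _ (div_nonpos_of_nonpos_of_nonneg hs hr.le)]
    · rw [div_rpow hs.le hr.le]; field_simp
  simp_rw [hsplit]
  rw [integral_const_mul, Measure.integral_comp_div (fun t => t ^ β * w t), smul_eq_mul,
    abs_of_pos hr, rpow_add_one hr.ne']
  ring

theorem setIntegral_mul_sq_eq_integral {f : ℝ → ℝ} {S : Set ℝ} (hw : tsupport w ⊆ S) :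
    ∫ x in S, f x * w x ^ 2 = ∫ x, f x * w x ^ 2 :=
  setIntegral_eq_integral_of_forall_compl_eq_zero fun x hx => by
    simp [image_eq_zero_of_notMem_tsupport fun h => hx (hw h)]

end TestFunction

theorem le_integral_rpow_mul_comp_div_sq_of_antitoneOn {ζ h : ℝ → ℝ} (hζ : Continuous ζ)
    (hsupp : tsupport ζ ⊆ Ioo 0 1) (hh : AntitoneOn h (Ioc 0 1)) {r : ℝ} (hr0 : 0 < r)
    (hr1 : r ≤ 1) (β : ℝ) :
    h r * (r ^ (β + 1) * ∫ t, t ^ β * ζ t ^ 2) ≤ ∫ s, s ^ β * h s * ζ (s / r) ^ 2 := by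
  set ξ := fun s => ζ (s / r)
  have hξ : tsupport ξ ⊆ Ioo 0 r := tsupport_comp_div_subset hsupp hr0
  have hξ2 : tsupport (fun s => ξ s ^ 2) ⊆ Ioo 0 r := tsupport_sq.trans_subset hξ
  have hK : IsCompact (tsupport ξ) := isCompact_Icc.of_isClosed_subset (isClosed_tsupport ξ)
    (hξ.trans Ioo_subset_Icc_self)
  have hξc : Continuous ξ := hζ.comp (continuous_id.div_const r)
  have hint : Integrable fun s => s ^ β * h s * ξ s ^ 2 := by
    have hon : IntegrableOn (fun s => s ^ β * ξ s ^ 2 * h s) (tsupport ξ) :=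
      ((hh.mono fun s hs => ⟨(hξ hs).1, (hξ hs).2.le.trans hr1⟩).integrableOn_isCompact
        hK).continuousOn_mul (continuous_rpow_mul_of_zero_notMem_tsupport (hξc.pow 2)
          (fun h0 => (hξ2 h0).1.false) β).continuousOn hK
    rw [integrableOn_iff_integrable_of_support_subset fun s hs => subset_tsupport ξ
      fun h0 => hs (by simp [h0])] at hon
    exact hon.congr (.of_forall fun s => by ring)
  rw [← integral_rpow_mul_comp_div (w := fun t => ζ t ^ 2)
    (fun t ht => by simp [eq_zero_of_nonpos_of_tsupport_subset hsupp ht]) _ hr0,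
    ← integral_const_mul]
  refine integral_mono ((integrable_rpow_mul (hξc.pow 2) hξ2 β).const_mul _) hint fun s => ?_
  rcases eq_or_ne (ζ (s / r)) 0 with h0 | h0
  · simp [h0]
  · obtain ⟨hs0, hsr⟩ := hξ (subset_tsupport ξ h0)
    have hhs : h r ≤ h s := hh ⟨hs0, hsr.le.trans hr1⟩ ⟨hs0.trans hsr, hr1⟩ hsr.le
    calc h r * (s ^ β * ζ (s / r) ^ 2) ≤ h s * (s ^ β * ζ (s / r) ^ 2) := by gcongr
      _ = s ^ β * h s * ζ (s / r) ^ 2 := by ring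

theorem integral_rpow_mul_deriv_comp_div_sq_le {ζ h : ℝ → ℝ} (hζ : ContDiff ℝ 1 ζ)
    (hsupp : tsupport ζ ⊆ Ioo 0 1) {r : ℝ} (hr : 0 < r) {α β : ℝ}
    (hh0 : ∀ s ∈ Ioo 0 r, 0 ≤ h s) (hh : ∀ s ∈ Ioo 0 r, h s ≤ (r / s) ^ α * h r) :
    ∫ s, s ^ β * h s * deriv (fun s => ζ (s / r)) s ^ 2 ≤
      h r * r ^ (β - 1) * ∫ t, t ^ (β - α) * deriv ζ t ^ 2 := by
  have hζ' : tsupport (deriv ζ) ⊆ Ioo 0 1 := tsupport_deriv_subset.trans hsupp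
  have hw : tsupport (fun t => deriv ζ t ^ 2) ⊆ Ioo 0 1 := tsupport_sq.trans_subset hζ'
  have hwc : Continuous fun t => deriv ζ t ^ 2 := (hζ.continuous_deriv le_rfl).pow 2
  have hderiv : ∀ s, deriv (fun s => ζ (s / r)) s = deriv ζ (s / r) / r := fun s =>
    ((hζ.differentiable one_ne_zero (s / r)).hasDerivAt.comp s
      ((hasDerivAt_id s).div_const r)).deriv.trans (by simp [div_eq_mul_inv])
  have hmem : ∀ s, deriv ζ (s / r) ≠ 0 → s ∈ Ioo 0 r := fun s h0 =>
    tsupport_comp_div_subset hζ' hr (subset_tsupport _ h0)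
  have hpt : ∀ s, s ^ β * h s * deriv (fun s => ζ (s / r)) s ^ 2 ≤
      h r * r ^ (α - 2) * (s ^ (β - α) * deriv ζ (s / r) ^ 2) := fun s => by
    rw [hderiv]
    rcases eq_or_ne (deriv ζ (s / r)) 0 with h0 | h0
    · simp [h0]
    have hs0 := (hmem s h0).1
    calc s ^ β * h s * (deriv ζ (s / r) / r) ^ 2
        ≤ s ^ β * ((r / s) ^ α * h r) * (deriv ζ (s / r) / r) ^ 2 := by
          gcongr
          exact hh s (hmem s h0)
      _ = h r * r ^ (α - 2) * (s ^ (β - α) * deriv ζ (s / r) ^ 2) := by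
          rw [div_rpow hr.le hs0.le, rpow_sub hs0, rpow_sub hr, rpow_two]
          field_simp
  calc ∫ s, s ^ β * h s * deriv (fun s => ζ (s / r)) s ^ 2
      ≤ ∫ s, h r * r ^ (α - 2) * (s ^ (β - α) * deriv ζ (s / r) ^ 2) := by
        refine integral_mono_of_nonneg (.of_forall fun s => ?_) (Integrable.const_mul
          (integrable_rpow_mul (hwc.comp (continuous_id.div_const r))
            (tsupport_comp_div_subset hw hr) _) _) (.of_forall hpt)
        show 0 ≤ s ^ β * h s * deriv (fun s => ζ (s / r)) s ^ 2
        rw [hderiv]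
        rcases eq_or_ne (deriv ζ (s / r)) 0 with h0 | h0
        · simp [h0]
        have hs := hmem s h0
        have := hh0 s hs
        have := hs.1
        positivity
    _ = h r * r ^ (β - 1) * ∫ t, t ^ (β - α) * deriv ζ t ^ 2 := by
        rw [integral_const_mul, integral_rpow_mul_comp_div (w := fun t => deriv ζ t ^ 2)
          (fun t ht => by simp [eq_zero_of_nonpos_of_tsupport_subset hζ' ht]) _ hr,
          ← mul_assoc, mul_assoc (h r), ← rpow_add hr]
        ring_nf

theorem le_mul_div_sq_of_mul_rpow_le {y X A B c r e : ℝ} (hA : 0 < A) (hX : 0 ≤ X)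
    (hr : 0 < r) (h : y * (r ^ (e + 1) * A) ≤ c * (X * r ^ (e - 1) * B)) :
    y ≤ (c * B / A + 1) * X / r ^ 2 := by
  have hsplit : r ^ (e + 1) = r ^ (e - 1) * r ^ 2 := by
    rw [← rpow_natCast, ← rpow_add hr]; ring_nf
  have hr2 : 0 < r ^ (e - 1) := rpow_pos_of_pos hr _
  have hy : y * r ^ 2 * A ≤ c * B * X := le_of_mul_le_mul_left (by rw [hsplit] at h; linarith) hr2
  have hy' : y * r ^ 2 ≤ c * B * X / A := by rw [le_div_iff₀ hA]; linarith
  rw [le_div_iff₀ (by positivity), add_mul, div_mul_eq_mul_div]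
  linarith

/-- Lemma 2.3(ii): for a semi-stable radial solution of `-Δ_p u = g(u)` with
`u_r < 0`, where `g ≥ 0` is nondecreasing, locally Lipschitz and convex, there is a
constant `M` depending only on `N` and `p` with
`g'(u(r)) ≤ M |u_r(r)|^{p-2}/r²` for all `r ∈ (0,1]`. Semi-stability is the
quadratic form inequality
`∫ r^{N-1} g'(u) ξ² ≤ (p-1) ∫ r^{N-1} |u_r|^{p-2} ξ'²` for `ξ ∈ C_c¹(0,1)`. -/
theorem gprime_pointwise_bound
    (N p : ℝ) (hN : 1 ≤ N) (hp : 1 < p) :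
    ∃ M : ℝ, 0 < M ∧
      ∀ (g g' : ℝ → ℝ),
        (∀ x, 0 ≤ g x) → Monotone g → LocallyLipschitz g →
        ConvexOn ℝ univ g →
        (∀ x, HasDerivAt g (g' x) x) →
        (∀ x, 0 ≤ g' x) →
      ∀ (u u' : ℝ → ℝ),
        (∀ r ∈ Ioc (0:ℝ) 1, HasDerivAt u (u' r) r) →
        (∀ r ∈ Ioc (0:ℝ) 1, u' r < 0) →
        (∀ r ∈ Ioc (0:ℝ) 1,
          HasDerivAt (fun s => s ^ (N - 1) * |u' s| ^ (p - 1))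
            (r ^ (N - 1) * g (u r)) r) →
        -- semi-stability
        (∀ ξ : ℝ → ℝ, ContDiff ℝ 1 ξ → tsupport ξ ⊆ Ioo (0:ℝ) 1 →
          ∫ r in Ioo (0:ℝ) 1, r ^ (N - 1) * g' (u r) * (ξ r) ^ 2 ≤
            (p - 1) * ∫ r in Ioo (0:ℝ) 1,
              r ^ (N - 1) * |u' r| ^ (p - 2) * (deriv ξ r) ^ 2) →
        ∀ r ∈ Ioc (0:ℝ) 1, g' (u r) ≤ M * |u' r| ^ (p - 2) / r ^ 2 := by
  obtain ⟨ζ, hζsupp, -, hζ, -, hζ1⟩ := exists_contDiff_tsupport_subset (n := 1)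
    (Ioo_mem_nhds (by norm_num) (by norm_num) : Ioo (0 : ℝ) 1 ∈ nhds (1 / 2))
  set α := (N - 1 + 2 ^ N) * |p - 2| / (p - 1)
  set A := ∫ t, t ^ (N - 1) * ζ t ^ 2
  set B := ∫ t, t ^ (N - 1 - α) * deriv ζ t ^ 2
  have hA : 0 < A := integral_rpow_mul_sq_pos hζ.continuous hζsupp (by rw [hζ1]; norm_num) _
  have hB : 0 ≤ B := integral_nonneg (rpow_mul_sq_nonneg (tsupport_deriv_subset.trans hζsupp) _)
  refine ⟨(p - 1) * B / A + 1, by positivity, ?_⟩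
  rintro g g' hg0 hg - hgconv hg' - u u' hu hu' hflux hstab r ⟨hr0, hr1⟩
  set ξ := fun s => ζ (s / r)
  have hξ : ContDiff ℝ 1 ξ := hζ.comp (contDiff_id.div_const r)
  have hξsupp : tsupport ξ ⊆ Ioo 0 1 :=
    (tsupport_comp_div_subset hζsupp hr0).trans (Ioo_subset_Ioo_right hr1)
  have hlow : g' (u r) * (r ^ (N - 1 + 1) * A) ≤
      ∫ s in Ioo (0 : ℝ) 1, s ^ (N - 1) * g' (u s) * ξ s ^ 2 := by
    rw [setIntegral_mul_sq_eq_integral hξsupp]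
    exact le_integral_rpow_mul_comp_div_sq_of_antitoneOn hζ.continuous hζsupp
      ((hgconv.monotone_of_hasDerivAt hg').comp_antitoneOn
        ((convex_Ioc 0 1).antitoneOn_of_hasDerivAt_nonpos hu fun x hx => (hu' x hx).le)) hr0 hr1 _
  have hup : ∫ s in Ioo (0 : ℝ) 1, s ^ (N - 1) * |u' s| ^ (p - 2) * deriv ξ s ^ 2 ≤
      |u' r| ^ (p - 2) * r ^ (N - 1 - 1) * B := by
    rw [setIntegral_mul_sq_eq_integral (tsupport_deriv_subset.trans hξsupp)]
    exact integral_rpow_mul_deriv_comp_div_sq_le hζ hζsupp hr0 (fun s _ => by positivity)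
      fun s hs => abs_deriv_rpow_le hN hp hg0 hg hu hu' hflux hs.1 hs.2.le hr1
  exact le_mul_div_sq_of_mul_rpow_le hA (by positivity) hr0 <|
    hlow.trans <| (hstab ξ hξ hξsupp).trans <| mul_le_mul_of_nonneg_left hup (by linarith)
end
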